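/- arXiv:2306.01614 — 2 statements merged into one kernel-verified Lean document; each statement's English description precedes it below -/
import Mathlib

section
/- Pomset substitution satisfies the associativity monad law: for a pomset P over X and maps g : X → Pomset(Y), h : Y → Pomset(Z), the pomsets (P ⟫ g) ⟫ h and P ⟫ (λx. g(x) ⟫ h) are isomorphic. -/
universe u v w

/-- A pomset over `X`: a carrier set of events with an order relation and a
labelling into `X`. -/
structure Pomset (X : Type u) : Type (u + 1) where
  E : Type
  le : E → E → Prop
  lab : E → X

/-- The order of a pomset is a partial order. -/
def Pomset.IsPO {X : Type u} (P : Pomset X) : Prop :=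
  (∀ a, P.le a a) ∧ (∀ a b, P.le a b → P.le b a → a = b) ∧
  (∀ a b c, P.le a b → P.le b c → P.le a c)

/-- Isomorphism of pomsets: a label-preserving order-isomorphism. -/
def PomIso {X : Type u} (P Q : Pomset X) : Prop :=
  ∃ f : P.E ≃ Q.E, (∀ a b, P.le a b ↔ Q.le (f a) (f b)) ∧ ∀ e, Q.lab (f e) = P.lab e

/-- Pomset substitution: replace each event `e` of `P` by the pomset `g (P.lab e)`,
with the lexicographic order: `(e1,f1) ≤ (e2,f2)` iff `e1 < e2`, or `e1 = e2` and
`f1 ≤ f2` in the inner pomset. -/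
def Pomset.bind {X : Type u} {Y : Type v} (P : Pomset X) (g : X → Pomset Y) :
    Pomset Y where
  E := Σ e : P.E, (g (P.lab e)).E
  le a b := (P.le a.1 b.1 ∧ a.1 ≠ b.1) ∨
    ∃ h : a.1 = b.1, (g (P.lab b.1)).le (h ▸ a.2) b.2
  lab a := (g (P.lab a.1)).lab a.2

/-! Both sides have the same events up to reassociating `Σ e, Σ f, k` and the same labels.
Both orders compare two events lexicographically, i.e. at the first of the three levels where
their components differ, so they agree; the proof splits on that level. -/

namespace Pomset

variable {X : Type u} {Y : Type v} {Z : Type w}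

theorem bind_le_mk_mk_of_ne {P : Pomset X} {g : X → Pomset Y} {e₁ e₂ : P.E}
    (f₁ : (g (P.lab e₁)).E) (f₂ : (g (P.lab e₂)).E) (he : e₁ ≠ e₂) :
    (P.bind g).le ⟨e₁, f₁⟩ ⟨e₂, f₂⟩ ↔ P.le e₁ e₂ := by
  simp only [bind, he, ne_eq, not_false_eq_true, and_true, IsEmpty.exists_iff, or_false]

theorem bind_le_mk_mk_self {P : Pomset X} {g : X → Pomset Y} {e : P.E}
    (f₁ f₂ : (g (P.lab e)).E) :
    (P.bind g).le ⟨e, f₁⟩ ⟨e, f₂⟩ ↔ (g (P.lab e)).le f₁ f₂ := by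
  simp only [bind, ne_eq, not_true_eq_false, and_false, exists_const, false_or]

def bindBindEquiv (P : Pomset X) (g : X → Pomset Y) (h : Y → Pomset Z) :
    ((P.bind g).bind h).E ≃ (P.bind fun x => (g x).bind h).E :=
  Equiv.sigmaAssoc fun e f => (h ((g (P.lab e)).lab f)).E

theorem bind_bind_le_iff (P : Pomset X) (g : X → Pomset Y) (h : Y → Pomset Z)
    (a b : ((P.bind g).bind h).E) :
    ((P.bind g).bind h).le a b ↔
      (P.bind fun x => (g x).bind h).le (bindBindEquiv P g h a) (bindBindEquiv P g h b) := by
  obtain ⟨a₁, k₁⟩ := a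
  obtain ⟨a₂, k₂⟩ := b
  by_cases ha : a₁ = a₂
  · subst ha
    obtain ⟨e, f⟩ := a₁
    exact (bind_le_mk_mk_self k₁ k₂).trans
      ((bind_le_mk_mk_self _ _).trans (bind_le_mk_mk_self (P := g (P.lab e)) k₁ k₂)).symm
  rw [bind_le_mk_mk_of_ne _ _ ha]
  obtain ⟨e₁, f₁⟩ := a₁
  obtain ⟨e₂, f₂⟩ := a₂
  by_cases he : e₁ = e₂
  · subst he
    have hf : f₁ ≠ f₂ := by rintro rfl; exact ha rfl
    exact (bind_le_mk_mk_self f₁ f₂).trans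
      ((bind_le_mk_mk_self _ _).trans (bind_le_mk_mk_of_ne (P := g (P.lab e₁)) k₁ k₂ hf)).symm
  · exact (bind_le_mk_mk_of_ne f₁ f₂ he).trans (bind_le_mk_mk_of_ne _ _ he).symm

end Pomset

/-- pomset substitution satisfies the associativity monad law. -/
theorem Pomset.bind_assoc {X : Type u} {Y : Type v} {Z : Type w}
    (P : Pomset X) (g : X → Pomset Y) (h : Y → Pomset Z) :
    PomIso ((P.bind g).bind h) (P.bind fun x => (g x).bind h) :=
  ⟨P.bindBindEquiv g h, P.bind_bind_le_iff g h, fun _ => rfl⟩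
end

section
/- If G' ∈ G ⟫ I for plain executions G (of library L) and G' (of collection Λ) and implementation I of L over Λ, then there exists a plain matching f : G'.E → G.E, i.e., a surjection such that G.po = ∃f(G'.po) and for every event e of G, the restriction of G' to f⁻¹(e) belongs to I(label(e)). -/
/-! The matching is the first projection of the sigma type carrying `G ⟫ I`: its fibres are
the substituted blocks, and between distinct blocks the lexicographic order is that of `G`. -/

universe u v

/-- Pomset substitution (strict-order version): replace each event `e` of `P` by
the pomset `g (P.lab e)`, ordered lexicographically. -/
def Pomset.bindS {X : Type u} {Y : Type v} (P : Pomset X) (g : X → Pomset Y) :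
    Pomset Y where
  E := Σ e : P.E, (g (P.lab e)).E
  le a b := P.le a.1 b.1 ∨ ∃ h : a.1 = b.1, (g (P.lab b.1)).le (h ▸ a.2) b.2
  lab a := (g (P.lab a.1)).lab a.2

/-- Restriction of a pomset to a subset of its events. -/
def Pomset.restrict {X : Type u} (P : Pomset X) (s : Set P.E) : Pomset X :=
  ⟨{ x // x ∈ s }, fun a b => P.le a.1 b.1, fun a => P.lab a.1⟩

/-- The substitution `G ⟫ I` of an implementation `I` (mapping labels to sets of
pomsets) into the plain execution `G`: each event is replaced by some pomset chosen
from `I` applied to its label. -/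
def substOne {X Y : Type} (G : Pomset X) (I : X → Set (Pomset Y)) :
    Set (Pomset Y) :=
  { Q | ∃ lab' : G.E → Pomset Y,
      (∀ e, lab' e ∈ I (G.lab e)) ∧ Q = Pomset.bindS ⟨G.E, G.le, lab'⟩ id }

/-- Transport of a relation along a map. -/
def eproj {X Y : Type} (f : X → Y) (r : X → X → Prop) : Y → Y → Prop :=
  fun y1 y2 => y1 ≠ y2 ∧ ∃ x1 x2, f x1 = y1 ∧ f x2 = y2 ∧ r x1 x2

namespace Pomset

variable {X : Type u} {Y : Type v} (P : Pomset X) (g : X → Pomset Y)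

theorem bindS_fst_surjective (hne : ∀ e, Nonempty (g (P.lab e)).E) :
    Function.Surjective (Sigma.fst : (P.bindS g).E → P.E) := fun e =>
  let ⟨y⟩ := hne e
  ⟨⟨e, y⟩, rfl⟩

theorem le_eq_eproj_bindS_fst (hirr : ∀ e, ¬ P.le e e) (hne : ∀ e, Nonempty (g (P.lab e)).E) :
    P.le = eproj Sigma.fst (P.bindS g).le := by
  funext a b
  apply propext
  constructor
  · intro hab
    obtain ⟨x⟩ := hne a
    obtain ⟨y⟩ := hne b
    exact ⟨fun h => hirr a (h ▸ hab), ⟨a, x⟩, ⟨b, y⟩, rfl, rfl, Or.inl hab⟩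
  · rintro ⟨hne_ab, ⟨_, _⟩, ⟨_, _⟩, rfl, rfl, hle | ⟨heq, -⟩⟩
    · exact hle
    · exact absurd heq hne_ab

/-- Irreflexivity at `e` rules out the first disjunct of `bindS`'s order inside the fibre. -/
theorem restrict_bindS_fiber_iso {e : P.E} (he : ¬ P.le e e) :
    PomIso ((P.bindS g).restrict {a | a.1 = e}) (g (P.lab e)) := by
  refine ⟨Equiv.sigmaSubtype e, ?_, ?_⟩
  · rintro ⟨⟨a, x⟩, ha : a = e⟩ ⟨⟨b, y⟩, hb : b = e⟩
    subst ha hb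
    constructor
    · rintro (h | ⟨_, hle⟩)
      · exact absurd h he
      · exact hle
    · exact fun h => Or.inr ⟨rfl, h⟩
  · rintro ⟨⟨a, x⟩, ha : a = e⟩
    subst ha
    rfl

end Pomset

/-- if `G' ∈ G ⟫ I` (with `G` a plain execution whose order is
irreflexive and all pomsets provided by `I` nonempty), then there exists a plain
matching `f : G'.E → G.E`: a surjection such that `G.po = ∃f(G'.po)` and, for every
event `e` of `G`, the restriction of `G'` to `f⁻¹(e)` belongs (up to isomorphism)
to `I (label e)`. -/
theorem exists_plain_matching {X Y : Type}
    (G : Pomset X) (I : X → Set (Pomset Y))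
    (hirr : ∀ a, ¬ G.le a a)
    (hne : ∀ (x : X) (P : Pomset Y), P ∈ I x → Nonempty P.E)
    (G' : Pomset Y) (hG' : G' ∈ substOne G I) :
    ∃ f : G'.E → G.E,
      Function.Surjective f ∧
      G.le = eproj f G'.le ∧
      ∀ e : G.E, ∃ R ∈ I (G.lab e), PomIso (G'.restrict { a | f a = e }) R := by
  obtain ⟨lab', hmem, rfl⟩ := hG'
  let P : Pomset (Pomset Y) := ⟨G.E, G.le, lab'⟩
  have hfib : ∀ e, Nonempty (id (P.lab e)).E := fun e => hne _ _ (hmem e)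
  exact ⟨Sigma.fst, P.bindS_fst_surjective id hfib, P.le_eq_eproj_bindS_fst id hirr hfib,
    fun e => ⟨lab' e, hmem e, P.restrict_bindS_fiber_iso id (hirr e)⟩⟩
end
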